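/- Let a, e : ℕ → ℝ≥0, τ > 0, and suppose the energy identity (a_{n+1} − a_n)/(2τ) + e_n ≤ D + ε(a_{n+1} + a_n) holds for 0 ≤ n ≤ N−1 with Nτ ≤ T, ε ≥ 0, D ≥ 0, and 4ετ ≤ 1. Then a_N + 2τ Σ_{n=0}^{N−1} e_n ≤ e^{8εT} (a_0 + 2TD). -/

import Mathlib

open Finset

/-- Quantitative discrete energy-Grönwall estimate: if
(a_{n+1} − a_n)/(2τ) + e_n ≤ D + ε(a_{n+1} + a_n) for n < N, with Nτ ≤ T and
4ετ ≤ 1, then a_N + 2τ Σ_{n<N} e_n ≤ e^{8εT}(a_0 + 2TD). -/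
theorem discrete_energy_gronwall
    (N : ℕ) (a e : ℕ → ℝ) (τ ε D T : ℝ)
    (ha : ∀ n, 0 ≤ a n) (he : ∀ n, 0 ≤ e n)
    (hτ : 0 < τ) (hε : 0 ≤ ε) (hD : 0 ≤ D) (hT : (N : ℝ) * τ ≤ T)
    (hετ : 4 * ε * τ ≤ 1)
    (hrec : ∀ n < N, (a (n + 1) - a n) / (2 * τ) + e n ≤ D + ε * (a (n + 1) + a n)) :
    a N + 2 * τ * ∑ n ∈ range N, e n ≤ Real.exp (8 * ε * T) * (a 0 + 2 * T * D) := by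
  set x := ε * τ with hxdef
  have hx0 : 0 ≤ x := mul_nonneg hε hτ.le
  have hx4 : 4 * x ≤ 1 := by rw [hxdef]; linarith [hετ]
  set S : ℕ → ℝ := fun n => a n + 2 * τ * ∑ k ∈ range n, e k with hSdef
  have hSnn : ∀ n, 0 ≤ S n := fun n => add_nonneg (ha n)
    (mul_nonneg (by linarith) (Finset.sum_nonneg fun k _ => he k))
  have hexp : (1 + 2 * x) ≤ (1 - 2 * x) * Real.exp (8 * x) := by
    have h1 : 1 + 8 * x ≤ Real.exp (8 * x) := by
      have := Real.add_one_le_exp (8 * x); linarith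
    nlinarith [h1, hx0, hx4]
  have hpos : (0 : ℝ) < 1 - 2 * x := by linarith
  have key : ∀ n < N, S (n + 1) ≤ Real.exp (8 * x) * (S n + 2 * τ * D) := by
    intro n hn
    have h := hrec n hn
    have h' : (a (n + 1) - a n) / (2 * τ) ≤ D + ε * (a (n + 1) + a n) - e n := by
      linarith
    rw [div_le_iff₀ (by positivity)] at h'
    have hsum : S (n + 1) = S n + (a (n + 1) - a n) + 2 * τ * e n := by
      simp only [hSdef, Finset.sum_range_succ]; ring
    have hSig1 : 0 ≤ 2 * τ * ∑ k ∈ range (n + 1), e k :=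
      mul_nonneg (by linarith) (Finset.sum_nonneg fun k _ => he k)
    have hSig0 : 0 ≤ 2 * τ * ∑ k ∈ range n, e k :=
      mul_nonneg (by linarith) (Finset.sum_nonneg fun k _ => he k)
    have haS1 : a (n + 1) ≤ S (n + 1) := by
      simp only [hSdef]; linarith
    have haS0 : a n ≤ S n := by
      simp only [hSdef]; linarith
    have h'' : a (n + 1) - a n ≤ 2 * τ * D + 2 * x * (a (n + 1) + a n) - 2 * τ * e n := by
      rw [hxdef]; linarith [h']
    have hτD : (0:ℝ) ≤ 2 * τ * D := by positivity
    have h3 : (1 - 2 * x) * S (n + 1) ≤ (1 + 2 * x) * (S n + 2 * τ * D) := by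
      nlinarith [h'', hsum, mul_nonneg hx0 (sub_nonneg.mpr haS1),
        mul_nonneg hx0 (sub_nonneg.mpr haS0), mul_nonneg hx0 hτD]
    have h4 : (1 + 2 * x) * (S n + 2 * τ * D) ≤
        (1 - 2 * x) * Real.exp (8 * x) * (S n + 2 * τ * D) :=
      mul_le_mul_of_nonneg_right hexp
        (add_nonneg (hSnn n) (by positivity))
    have h5 : (1 - 2 * x) * S (n + 1) ≤
        (1 - 2 * x) * (Real.exp (8 * x) * (S n + 2 * τ * D)) := by
      calc (1 - 2 * x) * S (n + 1) ≤ (1 + 2 * x) * (S n + 2 * τ * D) := h3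
        _ ≤ (1 - 2 * x) * Real.exp (8 * x) * (S n + 2 * τ * D) := h4
        _ = (1 - 2 * x) * (Real.exp (8 * x) * (S n + 2 * τ * D)) := by ring
    exact (mul_le_mul_iff_right₀ hpos).mp h5
  have main : ∀ n ≤ N, S n ≤ Real.exp (8 * x * n) * (a 0 + 2 * (n * τ) * D) := by
    intro n hn
    induction n with
    | zero => simp [hSdef]
    | succ n ih =>
      have hn' : n < N := Nat.lt_of_succ_le hn
      have ih' := ih hn'.le
      have hA : 0 ≤ a 0 + 2 * ((n : ℝ) * τ) * D := add_nonneg (ha 0) (by positivity)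
      have he1 : Real.exp (8 * x) * Real.exp (8 * x * n) =
          Real.exp (8 * x * ((n : ℕ) + 1 : ℕ)) := by
        rw [← Real.exp_add]; push_cast; ring_nf
      have he2 : Real.exp (8 * x) ≤ Real.exp (8 * x * ((n : ℕ) + 1 : ℕ)) := by
        apply Real.exp_le_exp.mpr
        push_cast
        nlinarith [hx0, Nat.cast_nonneg (α := ℝ) n]
      have hstep := key n hn'
      have h6 : S (n + 1) ≤ Real.exp (8 * x) *
          (Real.exp (8 * x * n) * (a 0 + 2 * ((n : ℝ) * τ) * D) + 2 * τ * D) := by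
        calc S (n + 1) ≤ Real.exp (8 * x) * (S n + 2 * τ * D) := hstep
          _ ≤ _ := by
            apply mul_le_mul_of_nonneg_left _ (Real.exp_pos _).le
            linarith
      have hτD : 0 ≤ 2 * τ * D := by positivity
      have h7 : (Real.exp (8 * x * ((n : ℕ) + 1 : ℕ)) - Real.exp (8 * x)) *
          (2 * τ * D) ≥ 0 := mul_nonneg (by linarith) hτD
      calc S (n + 1) ≤ Real.exp (8 * x) *
          (Real.exp (8 * x * n) * (a 0 + 2 * ((n : ℝ) * τ) * D) + 2 * τ * D) := h6
        _ = Real.exp (8 * x) * Real.exp (8 * x * n) * (a 0 + 2 * ((n : ℝ) * τ) * D)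
            + Real.exp (8 * x) * (2 * τ * D) := by ring
        _ = Real.exp (8 * x * ((n : ℕ) + 1 : ℕ)) * (a 0 + 2 * ((n : ℝ) * τ) * D)
            + Real.exp (8 * x) * (2 * τ * D) := by rw [he1]
        _ ≤ Real.exp (8 * x * ((n : ℕ) + 1 : ℕ)) * (a 0 + 2 * ((n : ℝ) * τ) * D)
            + Real.exp (8 * x * ((n : ℕ) + 1 : ℕ)) * (2 * τ * D) := by nlinarith [h7]
        _ = Real.exp (8 * x * ((n : ℕ) + 1 : ℕ)) *
            (a 0 + 2 * (((n : ℕ) + 1 : ℕ) * τ) * D) := by push_cast; ring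
  have hmain := main N le_rfl
  have hfin1 : Real.exp (8 * x * N) ≤ Real.exp (8 * ε * T) := by
    apply Real.exp_le_exp.mpr
    have : x * N = ε * ((N : ℝ) * τ) := by rw [hxdef]; ring
    nlinarith [mul_le_mul_of_nonneg_left hT hε]
  have hfin2 : a 0 + 2 * ((N : ℝ) * τ) * D ≤ a 0 + 2 * T * D := by
    nlinarith [mul_le_mul_of_nonneg_right hT hD]
  have hA : 0 ≤ a 0 + 2 * ((N : ℝ) * τ) * D := add_nonneg (ha 0) (by positivity)
  calc a N + 2 * τ * ∑ n ∈ range N, e n = S N := rfl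
    _ ≤ Real.exp (8 * x * N) * (a 0 + 2 * ((N : ℝ) * τ) * D) := hmain
    _ ≤ Real.exp (8 * ε * T) * (a 0 + 2 * T * D) := by
        apply mul_le_mul hfin1 hfin2 hA (Real.exp_pos _).le
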